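/- arXiv:1408.2340 — 6 statements merged into one kernel-verified Lean document; each statement's English description precedes it below -/
import Mathlib

section
/- If T is an essentially classical-quantum channel given by T(ρ) = Σᵢ Tr(Mᵢρ)σᵢ where (M₁,...,Mₖ) is a POVM with ‖Mᵢ‖ = 1 for all i and σᵢ are density matrices, then each POVM operator decomposes as Mᵢ = eᵢeᵢ* + M̃ᵢ where {e₁,...,eₖ} is an orthonormal family and the M̃ᵢ are positive semi-definite with Tr(M̃ᵢ eⱼeⱼ*) = 0 for all i,j. -/
open Matrix Kronecker BigOperators Filter
open scoped InnerProductSpace ComplexOrder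

noncomputable section

/-- `Mat d` is the algebra of `d × d` complex matrices. -/
abbrev Mat (d : ℕ) := Matrix (Fin d) (Fin d) ℂ

/-- A density matrix: positive semi-definite with unit trace. -/
def IsDensity {m : Type*} [Fintype m] (ρ : Matrix m m ℂ) : Prop :=
  ρ.PosSemidef ∧ ρ.trace = 1

/-- The tensor product `T₁ ⊗ T₂` of two (linear) maps on matrix algebras. -/
def tensorFun {d₁ d₂ n₁ n₂ : ℕ} (T₁ : Mat d₁ → Mat n₁) (T₂ : Mat d₂ → Mat n₂)
    (ρ : Matrix (Fin d₁ × Fin d₂) (Fin d₁ × Fin d₂) ℂ) :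
    Matrix (Fin n₁ × Fin n₂) (Fin n₁ × Fin n₂) ℂ :=
  ∑ i, ∑ j, ∑ k, ∑ l, ρ (i, k) (j, l) •
    (T₁ (Matrix.single i j 1) ⊗ₖ T₂ (Matrix.single k l 1))

/-- A quantum channel: completely positive and trace preserving. -/
def IsChannel {d n : ℕ} (T : Mat d →ₗ[ℂ] Mat n) : Prop :=
  (∀ ρ, (T ρ).trace = ρ.trace) ∧
  ∀ k : ℕ, ∀ ρ : Matrix (Fin d × Fin k) (Fin d × Fin k) ℂ,
    ρ.PosSemidef → (tensorFun (T ·) (id : Mat k → Mat k) ρ).PosSemidef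

/-- The image of the set of density matrices under a channel. -/
def chImage {d n : ℕ} (T : Mat d →ₗ[ℂ] Mat n) : Set (Mat n) :=
  (T ·) '' {ρ | IsDensity ρ}

/-- A POVM: a tuple of positive semi-definite matrices summing to the identity. -/
def IsPOVM {d k : ℕ} (M : Fin k → Mat d) : Prop :=
  (∀ i, (M i).PosSemidef) ∧ ∑ i, M i = 1

/-- The operator norm of a matrix, acting on the Euclidean (ℓ²) space. -/
def opNorm {d : ℕ} (M : Mat d) : ℝ :=
  ‖(Matrix.toEuclideanCLM (𝕜 := ℂ) (n := Fin d)) M‖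

/-- A separable bipartite state: a convex combination of tensor products of densities. -/
def SeparableState {d₁ d₂ : ℕ} (ρ : Matrix (Fin d₁ × Fin d₂) (Fin d₁ × Fin d₂) ℂ) : Prop :=
  ∃ (m : ℕ) (c : Fin m → ℝ) (A : Fin m → Mat d₁) (B : Fin m → Mat d₂),
    (∀ i, 0 ≤ c i) ∧ (∑ i, c i = 1) ∧ (∀ i, IsDensity (A i)) ∧ (∀ i, IsDensity (B i)) ∧
    ρ = ∑ i, (c i : ℂ) • (A i ⊗ₖ B i)

/-- An entanglement breaking channel: `T ⊗ id` maps states to separable states. -/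
def IsEntanglementBreaking {d n : ℕ} (T : Mat d →ₗ[ℂ] Mat n) : Prop :=
  ∀ ρ : Matrix (Fin d × Fin d) (Fin d × Fin d) ℂ, IsDensity ρ →
    SeparableState (tensorFun (T ·) (id : Mat d → Mat d) ρ)

/-- A vertex of a convex set `C`: a point of `C` such that the intersection of all
supporting hyperplanes of `C` at that point is the point itself. -/
def IsVertex {n : ℕ} (C : Set (Mat n)) (x : Mat n) : Prop :=
  x ∈ C ∧ ∀ y : Mat n,
    (∀ f : Mat n →ₗ[ℝ] ℝ, (∀ z ∈ C, f z ≤ f x) → f y = f x) → y = x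

/-- An essentially classical-quantum channel: `ρ ↦ ∑ᵢ Tr(Mᵢρ)σᵢ` for a POVM whose
elements all have operator norm one and density matrices `σᵢ`. -/
def IsEssentiallyCQ {d n : ℕ} (T : Mat d →ₗ[ℂ] Mat n) : Prop :=
  ∃ (k : ℕ) (M : Fin k → Mat d) (σ : Fin k → Mat n),
    IsPOVM M ∧ (∀ i, opNorm (M i) = 1) ∧ (∀ i, IsDensity (σ i)) ∧
    ∀ ρ, T ρ = ∑ i, (M i * ρ).trace • σ i

/-!
Since `0 ≤ Mᵢ ≤ 1`, we have `Mᵢ² ≤ Mᵢ ≤ 1`; so at a unit vector `eᵢ` where `‖Mᵢ‖ = 1` is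
attained, `1 = ⟨eᵢ, Mᵢ²eᵢ⟩ ≤ ⟨eᵢ, Mᵢeᵢ⟩ ≤ 1`, which forces `Mᵢeᵢ = eᵢ`. As `∑ⱼ Mⱼ = 1`, every
other `Mⱼ` then vanishes on `eᵢ`, and `⟨eᵢ, eⱼ⟩ = ⟨Mⱼeᵢ, eⱼ⟩ = 0`. Finally
`M̃ᵢ = Mᵢ - eᵢeᵢ* = (1 - eᵢeᵢ*) Mᵢ (1 - eᵢeᵢ*)` is positive and kills every `eⱼ`.
-/

open scoped MatrixOrder

theorem ContinuousLinearMap.exists_norm_eq_one_norm_apply_eq_opNorm {𝕜 E F : Type*} [RCLike 𝕜]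
    [NormedAddCommGroup E] [NormedSpace 𝕜 E] [FiniteDimensional 𝕜 E] [Nontrivial E]
    [NormedAddCommGroup F] [NormedSpace 𝕜 F] (T : E →L[𝕜] F) :
    ∃ x : E, ‖x‖ = 1 ∧ ‖T x‖ = ‖T‖ := by
  have hne : (Metric.sphere (0 : E) 1).Nonempty :=
    Set.nonempty_coe_sort.mp (NormedSpace.sphere_nonempty_rclike 𝕜 zero_le_one)
  have := FiniteDimensional.proper_rclike 𝕜 E
  obtain ⟨x, hx, hTx⟩ :=
    ((isCompact_sphere (0 : E) 1).image T.continuous.norm).sSup_mem (hne.image _)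
  exact ⟨x, by simpa using hx, hTx.trans T.sSup_sphere_eq_norm⟩


theorem EuclideanSpace.star_dotProduct_self {𝕜 n : Type*} [RCLike 𝕜] [Fintype n]
    (x : EuclideanSpace 𝕜 n) : star x.ofLp ⬝ᵥ x.ofLp = (‖x‖ : 𝕜) ^ 2 := by
  rw [dotProduct_comm, ← EuclideanSpace.inner_eq_star_dotProduct, inner_self_eq_norm_sq_to_K]

namespace Matrix

variable {𝕜 n : Type*} [RCLike 𝕜] [Fintype n]

theorem dotProduct_mulVec_le_of_le {A B : Matrix n n 𝕜} (h : A ≤ B) (v : n → 𝕜) :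
    star v ⬝ᵥ A *ᵥ v ≤ star v ⬝ᵥ B *ᵥ v := by
  have := (le_iff.mp h).dotProduct_mulVec_nonneg v
  rwa [sub_mulVec, dotProduct_sub, sub_nonneg] at this

theorem mulVec_eq_zero_of_le {A B : Matrix n n 𝕜} (hA : 0 ≤ A) (hAB : A ≤ B) {v : n → 𝕜}
    (hv : B *ᵥ v = 0) : A *ᵥ v = 0 := by
  refine ((nonneg_iff_posSemidef.mp hA).dotProduct_mulVec_zero_iff v).mp (le_antisymm ?_ ?_)
  · simpa [hv] using dotProduct_mulVec_le_of_le hAB v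
  · exact (nonneg_iff_posSemidef.mp hA).dotProduct_mulVec_nonneg v

theorem IsHermitian.star_dotProduct_eq_zero {A : Matrix n n 𝕜} (hA : A.IsHermitian)
    {v w : n → 𝕜} (hv : A *ᵥ v = v) (hw : A *ᵥ w = 0) : star w ⬝ᵥ v = 0 :=
  calc star w ⬝ᵥ v = star (A *ᵥ w) ⬝ᵥ v := by
        rw [star_mulVec, hA.eq, ← dotProduct_mulVec, hv]
    _ = 0 := by simp [hw]

variable [DecidableEq n]

theorem sub_mul_self_nonneg {A : Matrix n n 𝕜} (h0 : 0 ≤ A) (h1 : A ≤ 1) :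
    0 ≤ A - A * A := by
  have hA := nonneg_iff_posSemidef.mp h0
  have hA' := le_iff.mp h1
  have key : A - A * A = (1 - A)ᴴ * A * (1 - A) + Aᴴ * (1 - A) * A := by
    rw [hA.isHermitian.eq, hA'.isHermitian.eq]
    noncomm_ring
  rw [key, nonneg_iff_posSemidef]
  exact (hA.conjTranspose_mul_mul_same _).add (hA'.conjTranspose_mul_mul_same _)

theorem mulVec_eq_self_of_dotProduct_mulVec_eq {A : Matrix n n 𝕜} (h0 : 0 ≤ A) (h1 : A ≤ 1)
    {v : n → 𝕜} (hv : star (A *ᵥ v) ⬝ᵥ A *ᵥ v = star v ⬝ᵥ v) : A *ᵥ v = v := by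
  have hsq : star v ⬝ᵥ (A * A) *ᵥ v = star v ⬝ᵥ v := by
    rw [← hv, ← mulVec_mulVec, dotProduct_mulVec, star_mulVec,
      (nonneg_iff_posSemidef.mp h0).isHermitian.eq]
  have hle : star v ⬝ᵥ (A * A) *ᵥ v ≤ star v ⬝ᵥ A *ᵥ v :=
    dotProduct_mulVec_le_of_le (sub_nonneg.mp (sub_mul_self_nonneg h0 h1)) v
  have hge : star v ⬝ᵥ A *ᵥ v ≤ star v ⬝ᵥ v := by
    simpa using dotProduct_mulVec_le_of_le h1 v
  have hker : (1 - A) *ᵥ v = 0 := by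
    refine ((le_iff.mp h1).dotProduct_mulVec_zero_iff v).mp ?_
    rw [sub_mulVec, one_mulVec, dotProduct_sub, sub_eq_zero]
    exact le_antisymm (hsq ▸ hle) hge
  rwa [sub_mulVec, one_mulVec, sub_eq_zero, eq_comm] at hker

theorem exists_norm_eq_one_mulVec_eq_self {A : Matrix n n 𝕜} (h0 : 0 ≤ A) (h1 : A ≤ 1)
    (hA : ‖toEuclideanCLM (n := n) (𝕜 := 𝕜) A‖ = 1) :
    ∃ x : EuclideanSpace 𝕜 n, ‖x‖ = 1 ∧ A *ᵥ x.ofLp = x.ofLp := by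
  have : Nontrivial (EuclideanSpace 𝕜 n) := by
    by_contra h
    rw [not_nontrivial_iff_subsingleton] at h
    simp [Subsingleton.elim (toEuclideanCLM (n := n) (𝕜 := 𝕜) A) 0] at hA
  obtain ⟨x, hx, hAx⟩ :=
    (toEuclideanCLM (n := n) (𝕜 := 𝕜) A).exists_norm_eq_one_norm_apply_eq_opNorm
  refine ⟨x, hx, mulVec_eq_self_of_dotProduct_mulVec_eq h0 h1 ?_⟩
  rw [← ofLp_toEuclideanCLM, EuclideanSpace.star_dotProduct_self,
    EuclideanSpace.star_dotProduct_self, hAx, hA, hx]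

theorem sub_vecMulVec_nonneg {A : Matrix n n 𝕜} (h0 : 0 ≤ A) {v : n → 𝕜} (hAv : A *ᵥ v = v)
    (hv : star v ⬝ᵥ v = 1) : 0 ≤ A - vecMulVec v (star v) := by
  set P := vecMulVec v (star v)
  have hA := nonneg_iff_posSemidef.mp h0
  have hAP : A * P = P := by rw [mul_vecMulVec, hAv]
  have hPA : P * A = P := by
    rw [vecMulVec_mul, ← hA.isHermitian.eq, ← star_mulVec, hAv]
  have hPP : P * P = P := by rw [vecMulVec_mul_vecMulVec, hv, one_smul]
  have hPH : Pᴴ = P := by rw [conjTranspose_vecMulVec, star_star]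
  have key : (1 - P)ᴴ * A * (1 - P) = A - P := by
    rw [conjTranspose_sub, conjTranspose_one, hPH]
    simp only [sub_mul, mul_sub, one_mul, mul_one, hAP, hPA, hPP]
    abel
  rw [← key, nonneg_iff_posSemidef]
  exact hA.conjTranspose_mul_mul_same _

variable {ι : Type*} [Fintype ι]

theorem mulVec_eq_zero_of_sum_eq_one {M : ι → Matrix n n 𝕜} (h0 : ∀ i, 0 ≤ M i)
    (hsum : ∑ i, M i = 1) {i j : ι} (hji : j ≠ i) {v : n → 𝕜} (hv : M i *ᵥ v = v) :
    M j *ᵥ v = 0 := by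
  refine mulVec_eq_zero_of_le (B := 1 - M i) (h0 j) ?_
    (by rw [sub_mulVec, one_mulVec, hv, sub_self])
  rw [le_sub_iff_add_le]
  exact hsum ▸ Finset.add_le_sum (fun l _ => h0 l) (Finset.mem_univ j) (Finset.mem_univ i) hji

end Matrix

theorem stmt0_general {d k : ℕ} (M : Fin k → Mat d)
    (hPOVM : IsPOVM M) (hnorm : ∀ i, opNorm (M i) = 1) :
    ∃ (e : Fin k → EuclideanSpace ℂ (Fin d)) (Mt : Fin k → Mat d),
      Orthonormal ℂ e ∧
      (∀ i, M i = vecMulVec (e i) (star (e i)) + Mt i) ∧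
      (∀ i, (Mt i).PosSemidef) ∧
      (∀ i j, (Mt i * vecMulVec (e j) (star (e j))).trace = 0) := by
  obtain ⟨hPSD, hsum⟩ := hPOVM
  have h0 i : 0 ≤ M i := nonneg_iff_posSemidef.mpr (hPSD i)
  have h1 i : M i ≤ 1 := hsum ▸ Finset.single_le_sum (fun j _ => h0 j) (Finset.mem_univ i)
  choose e he hMe using fun i => exists_norm_eq_one_mulVec_eq_self (h0 i) (h1 i) (hnorm i)
  have he1 i : star (e i).ofLp ⬝ᵥ (e i).ofLp = 1 := by
    rw [EuclideanSpace.star_dotProduct_self, he]; norm_num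
  have hMe_ne {i j} (hji : j ≠ i) : M j *ᵥ (e i).ofLp = 0 :=
    mulVec_eq_zero_of_sum_eq_one h0 hsum hji (hMe i)
  have horth {i j} (hij : i ≠ j) : star (e i).ofLp ⬝ᵥ (e j).ofLp = 0 :=
    (hPSD j).isHermitian.star_dotProduct_eq_zero (hMe j) (hMe_ne hij.symm)
  have hMt i j : (M i - vecMulVec (e i) (star (e i))) *ᵥ (e j).ofLp = 0 := by
    rw [sub_mulVec, vecMulVec_mulVec, op_smul_eq_smul]
    rcases eq_or_ne i j with rfl | hij
    · rw [hMe, he1, one_smul, sub_self]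
    · rw [hMe_ne hij, horth hij, zero_smul, sub_zero]
  have he_orthonormal : Orthonormal ℂ e := by
    refine ⟨he, fun i j hij => ?_⟩
    change ⟪e i, e j⟫_ℂ = 0
    rw [EuclideanSpace.inner_eq_star_dotProduct, dotProduct_comm, horth hij]
  refine ⟨e, fun i => M i - vecMulVec (e i) (star (e i)), he_orthonormal,
    fun i => (add_sub_cancel _ _).symm,
    fun i => nonneg_iff_posSemidef.mp (sub_vecMulVec_nonneg (h0 i) (hMe i) (he1 i)),
    fun i j => by rw [mul_vecMulVec, hMt, trace_vecMulVec, zero_dotProduct]⟩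

/-- POVM elements of unit operator norm decompose as `Mᵢ = eᵢeᵢ* + M̃ᵢ` with
`{eᵢ}` orthonormal, `M̃ᵢ ⪰ 0` and `Tr(M̃ᵢ eⱼeⱼ*) = 0` for all `i, j`. -/
theorem stmt0 {d n k : ℕ} (M : Fin k → Mat d) (σ : Fin k → Mat n)
    (T : Mat d →ₗ[ℂ] Mat n)
    (hPOVM : IsPOVM M) (hnorm : ∀ i, opNorm (M i) = 1) (hσ : ∀ i, IsDensity (σ i))
    (hrep : ∀ ρ, T ρ = ∑ i, (M i * ρ).trace • σ i) :
    ∃ (e : Fin k → EuclideanSpace ℂ (Fin d)) (Mt : Fin k → Mat d),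
      Orthonormal ℂ e ∧
      (∀ i, M i = vecMulVec (e i) (star (e i)) + Mt i) ∧
      (∀ i, (Mt i).PosSemidef) ∧
      (∀ i j, (Mt i * vecMulVec (e j) (star (e j))).trace = 0) :=
  stmt0_general M hPOVM hnorm
end
end

section
/- If T is an essentially classical-quantum channel, T(ρ) = Σᵢ₌₁ᵏ Tr(Mᵢρ)σᵢ with POVM operators Mᵢ of unit operator norm and density matrices σᵢ, then the image of the set of density matrices under T equals the convex hull of {σ₁,...,σₖ}. -/
open Matrix Kronecker BigOperators Filter
open scoped InnerProductSpace ComplexOrder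

noncomputable section

/-! The weights `Tr(Mᵢρ)` of `T ρ` are nonnegative and sum to `Tr ρ = 1`, so `T ρ` lies in the
convex hull of the `σᵢ`. Conversely, a positive `Mᵢ` of norm one has eigenvalue `1`; the pure state
`ρ` on a unit eigenvector has `Tr(Mᵢρ) = 1`, which forces `Tr(Mⱼρ) = 0` for `j ≠ i`, so `T ρ = σᵢ`.
As the image of the convex set of states under a linear map, `Im(T)` then contains the hull. -/

namespace Matrix

variable {𝕜 n : Type*} [RCLike 𝕜] [Fintype n] [DecidableEq n]

theorem PosSemidef.exists_eigenvalues_eq_one_of_norm_eq_one {A : Matrix n n 𝕜} (hA : A.PosSemidef)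
    (h : ‖toEuclideanCLM (𝕜 := 𝕜) (n := n) A‖ = 1) : ∃ i, hA.1.eigenvalues i = 1 := by
  set B := toEuclideanCLM (𝕜 := 𝕜) (n := n) A
  have hB : IsSelfAdjoint B := hA.1.isSelfAdjoint.map _
  have hradius : spectralRadius 𝕜 B = 1 := by
    rw [B.spectralRadius_eq_nnnorm hB, ENNReal.coe_eq_one, ← NNReal.coe_eq_one, coe_nnnorm, h]
  have hne : (spectrum 𝕜 B).Nonempty := by
    by_contra hempty
    simp [spectralRadius, Set.not_nonempty_iff_eq_empty.mp hempty] at hradius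
  obtain ⟨z, hz, hzB⟩ := spectrum.exists_nnnorm_eq_spectralRadius_of_nonempty hne
  rw [AlgEquiv.spectrum_eq, hA.1.spectrum_eq_image_range] at hz
  obtain ⟨_, ⟨i, rfl⟩, rfl⟩ := hz
  refine ⟨i, ?_⟩
  rwa [hradius, ENNReal.coe_eq_one, ← NNReal.coe_eq_one, coe_nnnorm, RCLike.norm_ofReal,
    abs_of_nonneg (hA.eigenvalues_nonneg i)] at hzB

theorem PosSemidef.trace_mul_nonneg {A B : Matrix n n 𝕜} (hA : A.PosSemidef) (hB : B.PosSemidef) :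
    0 ≤ (A * B).trace := by
  open scoped MatrixOrder in
  obtain ⟨C, rfl⟩ := CStarAlgebra.nonneg_iff_eq_star_mul_self.mp hB.nonneg
  rw [← Matrix.mul_assoc, Matrix.trace_mul_cycle, star_eq_conjTranspose]
  exact (hA.mul_mul_conjTranspose_same C).trace_nonneg

theorem PosSemidef.exists_isDensity_trace_mul_eq_one {A : Matrix n n ℂ} (hA : A.PosSemidef)
    (h : ‖toEuclideanCLM (𝕜 := ℂ) (n := n) A‖ = 1) : ∃ ρ, IsDensity ρ ∧ (A * ρ).trace = 1 := by
  obtain ⟨i, hi⟩ := hA.exists_eigenvalues_eq_one_of_norm_eq_one h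
  set v := hA.1.eigenvectorBasis i
  have hv : v.ofLp ⬝ᵥ star v.ofLp = 1 := by
    rw [← EuclideanSpace.inner_eq_star_dotProduct, inner_self_eq_norm_sq_to_K,
      hA.1.eigenvectorBasis.orthonormal.1 i]
    simp
  refine ⟨vecMulVec v.ofLp (star v.ofLp), ⟨posSemidef_vecMulVec_self_star _, ?_⟩, ?_⟩
  · rw [trace_vecMulVec, hv]
  · rw [mul_vecMulVec, trace_vecMulVec, hA.1.mulVec_eigenvectorBasis, hi, one_smul, hv]

end Matrix

theorem convex_setOf_isDensity {m : Type*} [Fintype m] :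
    Convex ℝ {ρ : Matrix m m ℂ | IsDensity ρ} := by
  rintro ρ ⟨hρ, hρ1⟩ τ ⟨hτ, hτ1⟩ a b ha hb hab
  refine ⟨(hρ.smul ha).add (hτ.smul hb), ?_⟩
  rw [trace_add, trace_smul, trace_smul, hρ1, hτ1, RCLike.real_smul_eq_coe_smul (K := ℂ),
    RCLike.real_smul_eq_coe_smul (K := ℂ)]
  simp [← Complex.ofReal_add, hab]

theorem convex_chImage {d n : ℕ} (T : Mat d →ₗ[ℂ] Mat n) : Convex ℝ (chImage T) :=
  convex_setOf_isDensity.linear_image (T.restrictScalars ℝ)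

theorem sum_smul_mem_convexHull_of_nonneg {E ι : Type*} [AddCommGroup E] [Module ℂ E]
    [Module ℝ E] [IsScalarTower ℝ ℂ E] [Fintype ι] {w : ι → ℂ} (v : ι → E)
    (hw₀ : ∀ i, 0 ≤ w i) (hw₁ : ∑ i, w i = 1) : ∑ i, w i • v i ∈ convexHull ℝ (Set.range v) := by
  have hw : ∀ i, w i = (‖w i‖ : ℂ) := fun i => Complex.eq_coe_norm_of_nonneg (hw₀ i)
  have hsum : ∑ i, ‖w i‖ = 1 := by
    have : ((∑ i, ‖w i‖ : ℝ) : ℂ) = 1 := by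
      rw [Complex.ofReal_sum, ← hw₁]
      exact Finset.sum_congr rfl fun i _ => (hw i).symm
    exact_mod_cast this
  convert (convex_convexHull ℝ (Set.range v)).sum_mem (fun i _ => norm_nonneg (w i)) hsum
    (fun i _ => subset_convexHull ℝ _ ⟨i, rfl⟩) using 2 with i
  rw [RCLike.real_smul_eq_coe_smul (K := ℂ)]
  exact congrArg (· • v i) (hw i)

namespace IsPOVM

variable {d k : ℕ} {M : Fin k → Mat d}

theorem sum_trace_mul (hM : IsPOVM M) (ρ : Mat d) : ∑ i, (M i * ρ).trace = ρ.trace := by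
  rw [← trace_sum, ← Finset.sum_mul, hM.2, one_mul]

theorem trace_mul_eq_ite (hM : IsPOVM M) {ρ : Mat d} (hρ : IsDensity ρ) {i : Fin k}
    (hi : (M i * ρ).trace = 1) (j : Fin k) : (M j * ρ).trace = if j = i then 1 else 0 := by
  split_ifs with hji
  · rw [hji, hi]
  have hle : (M i * ρ).trace + (M j * ρ).trace ≤ ∑ l, (M l * ρ).trace :=
    Finset.add_le_sum (fun l _ => (hM.1 l).trace_mul_nonneg hρ.1) (Finset.mem_univ _)
      (Finset.mem_univ _) (Ne.symm hji)
  rw [hM.sum_trace_mul, hρ.2, hi] at hle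
  exact le_antisymm (by simpa using hle) ((hM.1 j).trace_mul_nonneg hρ.1)

end IsPOVM

theorem stmt1_general {d n k : ℕ} (T : Mat d →ₗ[ℂ] Mat n) (M : Fin k → Mat d) (σ : Fin k → Mat n)
    (hPOVM : IsPOVM M) (hnorm : ∀ i, opNorm (M i) = 1)
    (hrep : ∀ ρ, T ρ = ∑ i, (M i * ρ).trace • σ i) :
    chImage T = convexHull ℝ (Set.range σ) := by
  refine Set.Subset.antisymm ?_ (convexHull_min ?_ (convex_chImage T))
  · rintro _ ⟨ρ, hρ, rfl⟩
    show T ρ ∈ _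
    rw [hrep]
    exact sum_smul_mem_convexHull_of_nonneg σ (fun i => (hPOVM.1 i).trace_mul_nonneg hρ.1)
      ((hPOVM.sum_trace_mul ρ).trans hρ.2)
  · rintro _ ⟨i, rfl⟩
    obtain ⟨ρ, hρ, hi⟩ := (hPOVM.1 i).exists_isDensity_trace_mul_eq_one (hnorm i)
    refine ⟨ρ, hρ, ?_⟩
    simp only [hrep, hPOVM.trace_mul_eq_ite hρ hi, ite_smul, one_smul, zero_smul,
      Finset.sum_ite_eq', Finset.mem_univ, if_true]

/-- the image of an essentially classical-quantum channel is the convex hull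
of the states `σ₁, …, σₖ`. -/
theorem stmt1 {d n k : ℕ} (T : Mat d →ₗ[ℂ] Mat n) (M : Fin k → Mat d) (σ : Fin k → Mat n)
    (hPOVM : IsPOVM M) (hnorm : ∀ i, opNorm (M i) = 1) (hσ : ∀ i, IsDensity (σ i))
    (hrep : ∀ ρ, T ρ = ∑ i, (M i * ρ).trace • σ i) :
    chImage T = convexHull ℝ (Set.range σ) :=
  stmt1_general T M σ hPOVM hnorm hrep
end
end

section
/- Let T : M_d(ℂ) → M_n(ℂ) be a quantum channel and x, y distinct unit vectors in ℂᵈ such that T(xx*) is a vertex of Im(T). Let H = span{x,y} and let x⊥ be a unit vector in H orthogonal to x. Then for every density matrix ρ supported on H, T(ρ) = ⟨x, ρx⟩ T(xx*) + ⟨x⊥, ρx⊥⟩ T(x⊥x⊥*). -/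
/-!
For a unit vector `x` and any `w ⊥ x`, the states `(x + s w)(x + s w)* / (1 + s² ‖w‖²)`, `s ∈ ℝ`,
pass through `xx*` at `s = 0` with velocity `xw* + wx*`. Every linear functional supporting
`Im(T)` at the vertex `T(xx*)` is maximised along their image at `s = 0`, so it vanishes on
`T(xw* + wx*)`; the vertex property then gives `T(xw* + wx*) = 0`. Replacing `w` by `i w` kills
`T(xw*)` and `T(wx*)` separately, so `T` annihilates the off-diagonal part of any `ρ` supported on
`span{x, x⊥}`.
-/

open Matrix Kronecker BigOperators Filter
open scoped InnerProductSpace ComplexOrder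

noncomputable section

lemma eq_zero_of_forall_mul_le_sq_mul {a K : ℝ} (h : ∀ s : ℝ, s * a ≤ s ^ 2 * K) : a = 0 := by
  by_contra ha
  -- at `s = a / (|K| + 1)` the hypothesis reduces to `|K| + 1 ≤ K`
  have hK : 0 < |K| + 1 := by positivity
  have hs := h (a / (|K| + 1))
  have ha2 : 0 < a ^ 2 := by positivity
  rw [div_pow, div_mul_eq_mul_div, div_mul_eq_mul_div, div_le_div_iff₀ hK (by positivity)] at hs
  nlinarith [mul_pos (mul_pos ha2 hK) (by linarith [le_abs_self K] : 0 < |K| + 1 - K)]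

theorem IsVertex.eq_zero_of_forall_smul_mem {n : ℕ} {C : Set (Mat n)} {v A B : Mat n} {c : ℝ}
    (hv : IsVertex C v) (hc : 0 ≤ c)
    (h : ∀ s : ℝ, (1 + s ^ 2 * c)⁻¹ • (v + s • A + s ^ 2 • B) ∈ C) : A = 0 := by
  suffices v + A = v by simpa using this
  refine hv.2 _ fun f hf => ?_
  have hfA : ∀ s : ℝ, s * f A ≤ s ^ 2 * (c * f v - f B) := fun s => by
    have hs := hf _ (h s)
    simp only [map_smul, map_add, smul_eq_mul] at hs
    rw [inv_mul_le_iff₀ (by positivity)] at hs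
    linarith
  rw [map_add, eq_zero_of_forall_mul_le_sq_mul hfA, add_zero]

section

variable {d : ℕ}

lemma vecMulVec_add_smul_star {m : Type*} (x w : m → ℂ) (s : ℝ) :
    vecMulVec (x + s • w) (star (x + s • w)) = vecMulVec x (star x)
      + s • (vecMulVec x (star w) + vecMulVec w (star x)) + s ^ 2 • vecMulVec w (star w) := by
  simp only [star_add, star_smul, star_trivial, add_vecMulVec, vecMulVec_add, smul_vecMulVec,
    vecMulVec_smul]
  module

lemma trace_vecMulVec_star (z : EuclideanSpace ℂ (Fin d)) :
    (vecMulVec z (star z) : Mat d).trace = (‖z‖ ^ 2 : ℝ) := by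
  rw [trace_vecMulVec, ← EuclideanSpace.inner_eq_star_dotProduct, inner_self_eq_norm_sq_to_K]
  push_cast; rfl

lemma isDensity_inv_norm_sq_smul_vecMulVec {z : EuclideanSpace ℂ (Fin d)} (hz : z ≠ 0) :
    IsDensity ((‖z‖ ^ 2)⁻¹ • vecMulVec z (star z) : Mat d) := by
  refine ⟨(posSemidef_vecMulVec_self_star _).smul (by positivity), ?_⟩
  rw [trace_smul, trace_vecMulVec_star, Complex.real_smul, ← Complex.ofReal_mul,
    inv_mul_cancel₀ (by positivity), Complex.ofReal_one]

variable {n : ℕ} {T : Mat d →ₗ[ℂ] Mat n} {x w : EuclideanSpace ℂ (Fin d)}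

lemma map_vecMulVec_add_vecMulVec_eq_zero_of_isVertex
    (hvert : IsVertex (chImage T) (T (vecMulVec x (star x)))) (hx : ‖x‖ = 1)
    (hxw : ⟪x, w⟫_ℂ = 0) :
    T (vecMulVec x (star w) + vecMulVec w (star x)) = 0 := by
  refine hvert.eq_zero_of_forall_smul_mem (B := T (vecMulVec w (star w))) (sq_nonneg ‖w‖)
    fun s => ?_
  set z := x + s • w
  have hz : ‖z‖ ^ 2 = 1 + s ^ 2 * ‖w‖ ^ 2 := by
    have := norm_add_sq_eq_norm_sq_add_norm_sq_of_inner_eq_zero (𝕜 := ℂ) x (s • w)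
      (by rw [inner_smul_right_eq_smul, hxw, smul_zero])
    rw [norm_smul, Real.norm_eq_abs] at this
    nlinarith [sq_abs s]
  have hz0 : z ≠ 0 := by
    intro h0
    rw [h0, norm_zero] at hz
    nlinarith [sq_nonneg s, sq_nonneg ‖w‖]
  refine ⟨_, isDensity_inv_norm_sq_smul_vecMulVec hz0, ?_⟩
  simp only [hz, LinearMap.map_smul_of_tower, z, WithLp.ofLp_add, WithLp.ofLp_smul,
    vecMulVec_add_smul_star, map_add]

lemma map_vecMulVec_eq_zero_of_isVertex
    (hvert : IsVertex (chImage T) (T (vecMulVec x (star x)))) (hx : ‖x‖ = 1)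
    (hxw : ⟪x, w⟫_ℂ = 0) :
    T (vecMulVec x (star w)) = 0 ∧ T (vecMulVec w (star x)) = 0 := by
  have hsum := map_vecMulVec_add_vecMulVec_eq_zero_of_isVertex hvert hx hxw
  have hIsum := map_vecMulVec_add_vecMulVec_eq_zero_of_isVertex (w := Complex.I • w) hvert hx
    (by rw [inner_smul_right, hxw, mul_zero])
  simp only [WithLp.ofLp_smul, star_smul, vecMulVec_smul, smul_vecMulVec, map_add, map_smul,
    Complex.star_def, Complex.conj_I] at hsum hIsum
  set a := T (vecMulVec x (star w))
  set b := T (vecMulVec w (star x))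
  have hb : b = -a := eq_neg_of_add_eq_zero_right hsum
  have ha : (-2 * Complex.I) • a = 0 := by rw [← hIsum, hb]; module
  have ha0 : a = 0 := (smul_eq_zero.mp ha).resolve_left (by simp)
  exact ⟨ha0, by rw [hb, ha0, neg_zero]⟩

end

theorem stmt3_general {d n : ℕ} (T : Mat d →ₗ[ℂ] Mat n)
    (x xp : EuclideanSpace ℂ (Fin d))
    (hx : ‖x‖ = 1)
    (hvert : IsVertex (chImage T) (T (vecMulVec x (star x))))
    (hxp : ‖xp‖ = 1) (hperp : ⟪x, xp⟫_ℂ = 0)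
    (ρ : Mat d)
    (hsupp : ρ ∈ Submodule.span ℂ
      ({vecMulVec x (star x), vecMulVec x (star xp),
        vecMulVec xp (star x), vecMulVec xp (star xp)} : Set (Mat d))) :
    T ρ = (star x ⬝ᵥ ρ *ᵥ x) • T (vecMulVec x (star x))
        + (star xp ⬝ᵥ ρ *ᵥ xp) • T (vecMulVec xp (star xp)) := by
  obtain ⟨hTxxp, hTxpx⟩ := map_vecMulVec_eq_zero_of_isVertex hvert hx hperp
  have hdot (a b : EuclideanSpace ℂ (Fin d)) : star a ⬝ᵥ b = ⟪a, b⟫_ℂ := by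
    rw [EuclideanSpace.inner_eq_star_dotProduct, dotProduct_comm]
  have hperp' : ⟪xp, x⟫_ℂ = 0 := by rw [← inner_conj_symm, hperp, map_zero]
  induction hsupp using Submodule.span_induction with
  | mem M hM =>
    rcases hM with rfl | rfl | rfl | rfl <;>
      simp [vecMulVec_mulVec, hdot, hperp, hperp', hx, hxp, hTxxp, hTxpx]
  | zero => simp
  | add M N _ _ hM hN => simp only [map_add, hM, hN, add_mulVec, dotProduct_add, add_smul]; abel
  | smul c M _ hM =>
    simp only [map_smul, hM, smul_mulVec, dotProduct_smul, smul_add, smul_smul, smul_eq_mul]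

/-- if `T(xx*)` is a vertex of the image, then on the two-dimensional subspace
`H = span{x, y}` the channel acts as
`ρ ↦ ⟨x, ρx⟩ T(xx*) + ⟨x⊥, ρx⊥⟩ T(x⊥x⊥*)`, where `x⊥ ∈ H` is a unit vector orthogonal
to `x`.  Being supported on `H` is expressed as membership in the span of the four
elementary operators built from `x` and `x⊥`. -/
theorem stmt3 {d n : ℕ} (T : Mat d →ₗ[ℂ] Mat n) (hT : IsChannel T)
    (x y xp : EuclideanSpace ℂ (Fin d))
    (hx : ‖x‖ = 1) (hy : ‖y‖ = 1)
    (hxy : vecMulVec x (star x) ≠ (vecMulVec y (star y) : Mat d))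
    (hvert : IsVertex (chImage T) (T (vecMulVec x (star x))))
    (hxpH : xp ∈ Submodule.span ℂ ({x, y} : Set (EuclideanSpace ℂ (Fin d))))
    (hxp : ‖xp‖ = 1) (hperp : ⟪x, xp⟫_ℂ = 0)
    (ρ : Mat d) (hρ : IsDensity ρ)
    (hsupp : ρ ∈ Submodule.span ℂ
      ({vecMulVec x (star x), vecMulVec x (star xp),
        vecMulVec xp (star x), vecMulVec xp (star xp)} : Set (Mat d))) :
    T ρ = (star x ⬝ᵥ ρ *ᵥ x) • T (vecMulVec x (star x))
        + (star xp ⬝ᵥ ρ *ᵥ xp) • T (vecMulVec xp (star xp)) :=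
  stmt3_general T x xp hx hvert hxp hperp ρ hsupp
end
end

section
/- Let T : M_d(ℂ) → M_n(ℂ) be a quantum channel, σ a vertex of Im(T), and x₁,...,xₖ unit vectors in ℂᵈ with T(xᵢxᵢ*) = σ for all i. Then T(xx*) = σ for every unit vector x in span{x₁,...,xₖ}. -/
open Matrix Kronecker BigOperators Filter
open scoped InnerProductSpace ComplexOrder

noncomputable section

/-! A supporting functional `f` of the image at `σ` yields the real functional
`φ ρ = f σ * re (tr ρ) - f (T ρ)`, which is nonnegative on positive semidefinite matrices.
On rank-one matrices `v vᴴ` it is a nonnegative hermitian quadratic form in `v`, so by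
Cauchy–Schwarz its zero set is the kernel of its polar form, a complex subspace. All `xᵢ` lie in
it, hence so does every `z` in their span: `f (T (z zᴴ)) = f σ` for every supporting `f`, and the
vertex property forces `T (z zᴴ) = σ`. -/

section RankOne

variable {m : Type*} [Fintype m]

lemma vecMulVec_smul_self_star (c : ℂ) (v : m → ℂ) :
    vecMulVec (c • v) (star (c • v)) = (Complex.normSq c : ℝ) • vecMulVec v (star v) := by
  rw [star_smul, smul_vecMulVec, vecMulVec_smul, smul_smul, Complex.star_def, Complex.mul_conj,
    Complex.coe_smul]

lemma apply_nonneg_of_posSemidef_of_isDensity {φ : Matrix m m ℂ →ₗ[ℝ] ℝ}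
    (hφ : ∀ ρ, IsDensity ρ → 0 ≤ φ ρ) {ρ : Matrix m m ℂ} (hρ : ρ.PosSemidef) : 0 ≤ φ ρ := by
  by_cases ht : ρ.trace = 0
  · rw [hρ.trace_eq_zero_iff.1 ht, map_zero]
  obtain ⟨hre, him⟩ := Complex.nonneg_iff.1 hρ.trace_nonneg
  set r := ρ.trace.re
  have htr : ρ.trace = r := Complex.ext rfl him.symm
  have hr : 0 < r := hre.lt_of_ne fun h => ht (by rw [htr, ← h, Complex.ofReal_zero])
  have hdens : IsDensity (r⁻¹ • ρ) := by
    refine ⟨hρ.smul (inv_nonneg.2 hr.le), ?_⟩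
    rw [trace_smul, htr, Complex.real_smul, ← Complex.ofReal_mul, inv_mul_cancel₀ hr.ne',
      Complex.ofReal_one]
  calc 0 ≤ r * φ (r⁻¹ • ρ) := mul_nonneg hr.le (hφ _ hdens)
    _ = φ ρ := by rw [map_smul, smul_eq_mul, mul_inv_cancel_left₀ hr.ne']

variable (φ : Matrix m m ℂ →ₗ[ℝ] ℝ)

def rankOnePolarForm : LinearMap.BilinForm ℝ (m → ℂ) :=
  LinearMap.mk₂ ℝ (fun u w => φ (vecMulVec u (star w)) + φ (vecMulVec w (star u)))
    (fun u u' w => by simp only [add_vecMulVec, vecMulVec_add, star_add, map_add]; ring)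
    (fun r u w => by
      simp only [smul_vecMulVec, vecMulVec_smul, star_smul, star_trivial, map_smul, smul_eq_mul]
      ring)
    (fun u w w' => by simp only [add_vecMulVec, vecMulVec_add, star_add, map_add]; ring)
    (fun r u w => by
      simp only [smul_vecMulVec, vecMulVec_smul, star_smul, star_trivial, map_smul, smul_eq_mul]
      ring)

omit [Fintype m]

lemma rankOnePolarForm_apply (u w : m → ℂ) :
    rankOnePolarForm φ u w = φ (vecMulVec u (star w)) + φ (vecMulVec w (star u)) := rfl

lemma rankOnePolarForm_isSymm : LinearMap.IsSymm (rankOnePolarForm φ) :=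
  ⟨fun u w => by simp only [rankOnePolarForm_apply, RingHom.id_apply, add_comm]⟩

variable {φ} (hφ : ∀ v, 0 ≤ φ (vecMulVec v (star v)))
include hφ

lemma mem_ker_rankOnePolarForm_iff {v : m → ℂ} :
    v ∈ LinearMap.ker (rankOnePolarForm φ) ↔ φ (vecMulVec v (star v)) = 0 := by
  rw [← LinearMap.BilinForm.apply_apply_same_eq_zero_iff _ _ (rankOnePolarForm_isSymm φ),
    rankOnePolarForm_apply]
  · constructor <;> intro h <;> linarith
  · intro v
    rw [rankOnePolarForm_apply]
    linarith [hφ v]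

def rankOneNullSpace : Submodule ℂ (m → ℂ) where
  carrier := {v | φ (vecMulVec v (star v)) = 0}
  zero_mem' := by simp
  add_mem' {u w} hu hw := by
    simp only [Set.mem_ofPred_eq, ← mem_ker_rankOnePolarForm_iff hφ] at hu hw ⊢
    exact add_mem hu hw
  smul_mem' c v hv := by
    simp only [Set.mem_ofPred_eq, vecMulVec_smul_self_star, map_smul] at hv ⊢
    rw [hv, smul_zero]

end RankOne

lemma EuclideanSpace.trace_vecMulVec_self_star {ι : Type*} [Fintype ι] (z : EuclideanSpace ℂ ι) :
    (vecMulVec z (star z)).trace = ((‖z‖ ^ 2 : ℝ) : ℂ) := by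
  rw [trace_vecMulVec, ← EuclideanSpace.inner_eq_star_dotProduct, inner_self_eq_norm_sq_to_K]
  norm_cast

section SupportGap

variable {d n : ℕ} (T : Mat d →ₗ[ℂ] Mat n) (f : Mat n →ₗ[ℝ] ℝ) (σ : Mat n)

def supportGap : Mat d →ₗ[ℝ] ℝ :=
  f σ • (Complex.reLm ∘ₗ traceLinearMap (Fin d) ℝ ℂ) - f ∘ₗ T.restrictScalars ℝ

lemma supportGap_apply (ρ : Mat d) : supportGap T f σ ρ = f σ * ρ.trace.re - f (T ρ) := rfl

variable {T f σ}

lemma supportGap_nonneg (hf : ∀ τ ∈ chImage T, f τ ≤ f σ) {ρ : Mat d} (hρ : ρ.PosSemidef) :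
    0 ≤ supportGap T f σ ρ := by
  refine apply_nonneg_of_posSemidef_of_isDensity (fun ρ hρ => ?_) hρ
  rw [supportGap_apply, hρ.2, Complex.one_re, mul_one, sub_nonneg]
  exact hf (T ρ) ⟨ρ, hρ, rfl⟩

end SupportGap

theorem stmt5_general {d n k : ℕ} (T : Mat d →ₗ[ℂ] Mat n)
    (σ : Mat n) (hσ : IsVertex (chImage T) σ)
    (x : Fin k → EuclideanSpace ℂ (Fin d)) (hx : ∀ i, ‖x i‖ = 1)
    (hmap : ∀ i, T (vecMulVec (x i) (star (x i))) = σ) :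
    ∀ z : EuclideanSpace ℂ (Fin d), ‖z‖ = 1 → z ∈ Submodule.span ℂ (Set.range x) →
      T (vecMulVec z (star z)) = σ := by
  intro z hz hzspan
  refine hσ.2 _ fun f hf => ?_
  have hφ (v : Fin d → ℂ) : 0 ≤ supportGap T f σ (vecMulVec v (star v)) :=
    supportGap_nonneg hf (posSemidef_vecMulVec_self_star v)
  let K := (rankOneNullSpace hφ).comap (WithLp.linearEquiv 2 ℂ (Fin d → ℂ)).toLinearMap
  have hK : ∀ v : EuclideanSpace ℂ (Fin d), ‖v‖ = 1 →
      (v ∈ K ↔ f (T (vecMulVec v (star v))) = f σ) := by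
    intro v hv
    change supportGap T f σ (vecMulVec v (star v)) = 0 ↔ _
    rw [supportGap_apply, EuclideanSpace.trace_vecMulVec_self_star, hv, one_pow,
      Complex.ofReal_one, Complex.one_re, mul_one, sub_eq_zero, eq_comm]
  have hxK : Submodule.span ℂ (Set.range x) ≤ K :=
    Submodule.span_le.2 (Set.range_subset_iff.2 fun i => (hK _ (hx i)).2 (by rw [hmap]))
  exact (hK z hz).1 (hxK hzspan)

/-- if `σ` is a vertex of the image and `T(xᵢxᵢ*) = σ` for unit vectors
`x₁, …, xₖ`, then `T(xx*) = σ` for every unit vector `x` in their span. -/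
theorem stmt5 {d n k : ℕ} (T : Mat d →ₗ[ℂ] Mat n) (hT : IsChannel T)
    (σ : Mat n) (hσ : IsVertex (chImage T) σ)
    (x : Fin k → EuclideanSpace ℂ (Fin d)) (hx : ∀ i, ‖x i‖ = 1)
    (hmap : ∀ i, T (vecMulVec (x i) (star (x i))) = σ) :
    ∀ z : EuclideanSpace ℂ (Fin d), ‖z‖ = 1 → z ∈ Submodule.span ℂ (Set.range x) →
      T (vecMulVec z (star z)) = σ :=
  stmt5_general T σ hσ x hx hmap
end
end

section
/- Let T : M_d(ℂ) → M_n(ℂ) be a quantum channel that is image additive with the identity channel on M_d(ℂ). Then there exists an entanglement breaking channel S : M_d(ℂ) → M_d(ℂ) such that T = T ∘ S. -/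
open Matrix Kronecker BigOperators Filter
open scoped InnerProductSpace ComplexOrder

noncomputable section

/-!
Image additivity at the maximally entangled vector `ψ` writes the Choi matrix
`d⁻¹ ∑ T(E_pq) ⊗ E_pq` of `T` as `(T ⊗ id)(∑ cᵢ Aᵢ ⊗ Bᵢ)` for a separable state, i.e.
`d⁻¹ T(E_pq) = ∑ cᵢ (Bᵢ)_pq T(Aᵢ)`. Taking traces (`T` preserves them) gives
`∑ cᵢ Bᵢ = d⁻¹ 1`, so `Fᵢ = d cᵢ Bᵢᵀ` is a POVM and the measure-and-prepare channel
`S X = ∑ tr(Fᵢ X) Aᵢ` satisfies `T ∘ S = T` on matrix units. Such a channel is completely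
positive and entanglement breaking since `(S ⊗ id) ρ = ∑ Aᵢ ⊗ tr₁((Fᵢ ⊗ 1) ρ)` with positive
second factors.
-/

section PartialTrace

variable {ι κ : Type*} [Fintype ι]

-- `tr₁((F ⊗ 1) ρ)`
def partialTraceMul (F : Matrix ι ι ℂ) (ρ : Matrix (ι × κ) (ι × κ) ℂ) : Matrix κ κ ℂ :=
  Matrix.of fun k l => ∑ p, ∑ q, F q p * ρ (p, k) (q, l)

lemma partialTraceMul_sum {α : Type*} (s : Finset α) (F : α → Matrix ι ι ℂ)
    (ρ : Matrix (ι × κ) (ι × κ) ℂ) :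
    partialTraceMul (∑ i ∈ s, F i) ρ = (∑ i ∈ s, partialTraceMul (F i) ρ : Matrix κ κ ℂ) := by
  ext k l
  simp only [partialTraceMul, Matrix.of_apply, Matrix.sum_apply, Finset.sum_mul]
  exact (Finset.sum_congr rfl fun _ _ => Finset.sum_comm).trans Finset.sum_comm

lemma partialTraceMul_vecMulVec [Fintype κ] [DecidableEq κ] (v : ι → ℂ)
    (ρ : Matrix (ι × κ) (ι × κ) ℂ) :
    partialTraceMul (vecMulVec v (star v)) ρ =
      (Matrix.of fun (p : ι × κ) l => v p.1 * if p.2 = l then 1 else 0)ᴴ * ρ *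
        Matrix.of fun (p : ι × κ) l => v p.1 * if p.2 = l then 1 else 0 := by
  ext k l
  simp only [partialTraceMul, Matrix.mul_apply, Matrix.conjTranspose_apply, Matrix.of_apply,
    vecMulVec_apply, Pi.star_apply, Fintype.sum_prod_type, mul_ite, ite_mul,
    mul_one, mul_zero, zero_mul, apply_ite (star : ℂ → ℂ), star_zero,
    Finset.sum_ite_eq', Finset.mem_univ, if_true, Finset.sum_mul]
  rw [Finset.sum_comm]
  exact Finset.sum_congr rfl fun _ _ => Finset.sum_congr rfl fun _ _ => by ring

lemma Matrix.PosSemidef.partialTraceMul [Fintype κ] {F : Matrix ι ι ℂ}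
    {ρ : Matrix (ι × κ) (ι × κ) ℂ} (hF : F.PosSemidef) (hρ : ρ.PosSemidef) :
    (partialTraceMul F ρ).PosSemidef := by
  classical
  obtain ⟨m, v, rfl⟩ := Matrix.posSemidef_iff_eq_sum_vecMulVec.mp hF
  rw [partialTraceMul_sum]
  exact posSemidef_sum _ fun r _ => by
    rw [partialTraceMul_vecMulVec]
    exact hρ.conjTranspose_mul_mul_same _

lemma trace_partialTraceMul_one [DecidableEq ι] [Fintype κ] (ρ : Matrix (ι × κ) (ι × κ) ℂ) :
    (partialTraceMul 1 ρ).trace = ρ.trace := by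
  simp [partialTraceMul, Matrix.trace, Matrix.one_apply, Fintype.sum_prod_type,
    Finset.sum_comm (γ := κ)]

end PartialTrace

lemma tensorFun_id_apply {d n m : ℕ} (T : Mat d →ₗ[ℂ] Mat n)
    (ρ : Matrix (Fin d × Fin m) (Fin d × Fin m) ℂ) (a c : Fin n) (k l : Fin m) :
    tensorFun (T ·) (id : Mat m → Mat m) ρ (a, k) (c, l)
      = ∑ i, ∑ j, ρ (i, k) (j, l) * T (Matrix.single i j 1) a c := by
  simp only [tensorFun, Matrix.sum_apply, Matrix.smul_apply, Matrix.kroneckerMap_apply, id_eq,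
    Matrix.single_apply, smul_eq_mul]
  refine Finset.sum_congr rfl fun i _ => Finset.sum_congr rfl fun j _ => ?_
  rw [Finset.sum_comm]
  simp [ite_and, Finset.sum_ite_eq']

lemma LinearMap.matrix_apply_eq_sum_single {d n : ℕ} (T : Mat d →ₗ[ℂ] Mat n) (X : Mat d)
    (a b : Fin n) : T X a b = ∑ i, ∑ j, X i j * T (Matrix.single i j 1) a b := by
  conv_lhs => rw [Matrix.matrix_eq_sum_single X]
  simp only [map_sum, Matrix.sum_apply]
  refine Finset.sum_congr rfl fun i _ => Finset.sum_congr rfl fun j _ => ?_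
  rw [← smul_eq_mul, ← Matrix.smul_apply, ← map_smul, Matrix.smul_single, smul_eq_mul, mul_one]

lemma tensorFun_kronecker {d₁ d₂ n₁ n₂ : ℕ} (T₁ : Mat d₁ →ₗ[ℂ] Mat n₁)
    (T₂ : Mat d₂ →ₗ[ℂ] Mat n₂) (A : Mat d₁) (B : Mat d₂) :
    tensorFun (T₁ ·) (T₂ ·) (A ⊗ₖ B) = T₁ A ⊗ₖ T₂ B := by
  ext ⟨a, c⟩ ⟨b, e⟩
  rw [Matrix.kroneckerMap_apply, T₁.matrix_apply_eq_sum_single, T₂.matrix_apply_eq_sum_single]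
  simp only [tensorFun, Matrix.sum_apply, Matrix.smul_apply, Matrix.kroneckerMap_apply,
    smul_eq_mul, Finset.sum_mul_sum]
  refine Finset.sum_congr rfl fun i _ => ?_
  rw [Finset.sum_comm]
  exact Finset.sum_congr rfl fun _ _ => Finset.sum_congr rfl fun _ _ =>
    Finset.sum_congr rfl fun _ _ => by ring

lemma tensorFun_sum_smul {d₁ d₂ n₁ n₂ : ℕ} {ι : Type*} [Fintype ι] (T₁ : Mat d₁ → Mat n₁)
    (T₂ : Mat d₂ → Mat n₂) (c : ι → ℂ) (ρ : ι → Matrix (Fin d₁ × Fin d₂) (Fin d₁ × Fin d₂) ℂ) :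
    tensorFun T₁ T₂ (∑ i, c i • ρ i) = ∑ i, c i • tensorFun T₁ T₂ (ρ i) := by
  simp only [tensorFun, Matrix.sum_apply, Matrix.smul_apply, smul_eq_mul, Finset.sum_smul,
    Finset.smul_sum, smul_smul]
  simp only [Finset.sum_comm (s := (Finset.univ : Finset ι))]

lemma isDensity_single {m : Type*} [Fintype m] [DecidableEq m] (i : m) :
    IsDensity (Matrix.single i i (1 : ℂ)) := by
  refine ⟨?_, Matrix.trace_single_eq_same _ _⟩
  rw [← Matrix.diagonal_single]
  exact Matrix.PosSemidef.diagonal (Pi.single_nonneg.mpr zero_le_one)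

lemma Matrix.PosSemidef.exists_eq_smul_isDensity {m : Type*} [Fintype m] [DecidableEq m]
    {A : Matrix m m ℂ} (hA : A.PosSemidef) {τ : Matrix m m ℂ} (hτ : IsDensity τ) :
    ∃ r : ℝ, 0 ≤ r ∧ ∃ ρ, IsDensity ρ ∧ A = (r : ℂ) • ρ := by
  obtain ⟨r, hr, htr⟩ := RCLike.nonneg_iff_exists_ofReal.mp hA.trace_nonneg
  rcases hr.eq_or_lt with rfl | hr
  · refine ⟨0, le_rfl, τ, hτ, ?_⟩
    rw [Complex.ofReal_zero, zero_smul, ← hA.trace_eq_zero_iff, ← htr]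
    simp
  · refine ⟨r, hr.le, (r⁻¹ : ℝ) • A, ⟨hA.smul (inv_nonneg.mpr hr.le), ?_⟩, ?_⟩
    · rw [Matrix.trace_smul, ← htr, Complex.real_smul, Complex.ofReal_inv]
      exact inv_mul_cancel₀ (Complex.ofReal_ne_zero.mpr hr.ne')
    · rw [Complex.coe_smul, smul_smul, mul_inv_cancel₀ hr.ne', one_smul]

lemma separableState_sum_kronecker {d₁ d₂ k : ℕ} {σ : Fin k → Mat d₁} {C : Fin k → Mat d₂}
    (hσ : ∀ i, IsDensity (σ i)) (hC : ∀ i, (C i).PosSemidef) (htr : ∑ i, (C i).trace = 1) :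
    SeparableState (∑ i, σ i ⊗ₖ C i) := by
  obtain ⟨τ, hτ⟩ : ∃ τ : Mat d₂, IsDensity τ := by
    rcases Nat.eq_zero_or_pos d₂ with rfl | hd
    · simp [Matrix.trace] at htr
    · exact ⟨_, isDensity_single ⟨0, hd⟩⟩
  choose r hr ρ hρ hCρ using fun i => (hC i).exists_eq_smul_isDensity hτ
  refine ⟨k, r, σ, ρ, hr, ?_, hσ, hρ, ?_⟩
  · simp only [hCρ, Matrix.trace_smul, (hρ _).2, smul_eq_mul, mul_one] at htr
    exact_mod_cast htr
  · simp only [hCρ, Matrix.kronecker_smul]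

def measurePrepare {d n k : ℕ} (F : Fin k → Mat d) (σ : Fin k → Mat n) : Mat d →ₗ[ℂ] Mat n :=
  ∑ i, (Matrix.traceLinearMap (Fin d) ℂ ℂ ∘ₗ LinearMap.mulLeft ℂ (F i)).smulRight (σ i)

section MeasurePrepare

variable {d n k : ℕ} (F : Fin k → Mat d) (σ : Fin k → Mat n)

lemma measurePrepare_apply (X : Mat d) :
    measurePrepare F σ X = ∑ i, (F i * X).trace • σ i := by
  simp [measurePrepare]

lemma measurePrepare_single (p q : Fin d) :
    measurePrepare F σ (Matrix.single p q 1) = ∑ i, F i q p • σ i := by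
  simp [measurePrepare_apply, Matrix.trace_mul_single]

lemma tensorFun_measurePrepare {m : ℕ} (ρ : Matrix (Fin d × Fin m) (Fin d × Fin m) ℂ) :
    tensorFun (measurePrepare F σ ·) (id : Mat m → Mat m) ρ =
      ∑ i, σ i ⊗ₖ partialTraceMul (F i) ρ := by
  ext ⟨a, u⟩ ⟨b, v⟩
  simp only [tensorFun_id_apply, measurePrepare_single, Matrix.sum_apply, Matrix.smul_apply,
    Matrix.kroneckerMap_apply, partialTraceMul, Matrix.of_apply, smul_eq_mul, Finset.mul_sum]
  refine ((Finset.sum_congr rfl fun _ _ => Finset.sum_comm).trans Finset.sum_comm).trans ?_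
  exact Finset.sum_congr rfl fun _ _ => Finset.sum_congr rfl fun _ _ =>
    Finset.sum_congr rfl fun _ _ => by ring

end MeasurePrepare

section MeasurePrepareChannel

variable {d n k : ℕ} {F : Fin k → Mat d} {σ : Fin k → Mat n}

lemma IsPOVM.trace_measurePrepare (hF : IsPOVM F) (hσ : ∀ i, (σ i).trace = 1) (X : Mat d) :
    (measurePrepare F σ X).trace = X.trace := by
  simp only [measurePrepare_apply, Matrix.trace_sum, Matrix.trace_smul, hσ, smul_eq_mul, mul_one]
  rw [← Matrix.trace_sum, ← Finset.sum_mul, hF.2, one_mul]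

lemma IsPOVM.isChannel_measurePrepare (hF : IsPOVM F) (hσ : ∀ i, IsDensity (σ i)) :
    IsChannel (measurePrepare F σ) := by
  refine ⟨hF.trace_measurePrepare fun i => (hσ i).2, fun m ρ hρ => ?_⟩
  rw [tensorFun_measurePrepare]
  exact Matrix.posSemidef_sum _ fun i _ => (hσ i).1.kronecker ((hF.1 i).partialTraceMul hρ)


lemma IsPOVM.isEntanglementBreaking_measurePrepare (hF : IsPOVM F) (hσ : ∀ i, IsDensity (σ i)) :
    IsEntanglementBreaking (measurePrepare F σ) := by
  intro ρ hρ
  rw [tensorFun_measurePrepare]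
  refine separableState_sum_kronecker hσ (fun i => (hF.1 i).partialTraceMul hρ.1) ?_
  rw [← Matrix.trace_sum, ← partialTraceMul_sum, hF.2, trace_partialTraceMul_one, hρ.2]

end MeasurePrepareChannel

def maxEntangled (d : ℕ) : Fin d × Fin d → ℂ :=
  fun p => if p.1 = p.2 then ((Real.sqrt d)⁻¹ : ℝ) else 0

lemma maxEntangled_mul_star {d : ℕ} (p q : Fin d × Fin d) :
    maxEntangled d p * star (maxEntangled d q) =
      if p.1 = p.2 ∧ q.1 = q.2 then (d : ℂ)⁻¹ else 0 := by
  have hsqrt : ((Real.sqrt d)⁻¹ * (Real.sqrt d)⁻¹ : ℝ) = (d : ℝ)⁻¹ := by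
    rw [← mul_inv, Real.mul_self_sqrt d.cast_nonneg]
  unfold maxEntangled
  split_ifs
  · rw [Complex.star_def, Complex.conj_ofReal, ← Complex.ofReal_mul, hsqrt, Complex.ofReal_inv,
      Complex.ofReal_natCast]
  all_goals simp_all

lemma star_maxEntangled_dotProduct {d : ℕ} (hd : d ≠ 0) :
    star (maxEntangled d) ⬝ᵥ maxEntangled d = 1 := by
  simp only [dotProduct, Pi.star_apply, mul_comm (star _), maxEntangled_mul_star,
    Fintype.sum_prod_type]
  simp [Finset.sum_ite_eq, hd]

lemma tensorFun_id_vecMulVec_maxEntangled_apply {d n : ℕ} (T : Mat d →ₗ[ℂ] Mat n)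
    (a b : Fin n) (p q : Fin d) :
    tensorFun (T ·) (id : Mat d → Mat d)
        (vecMulVec (maxEntangled d) (star (maxEntangled d))) (a, p) (b, q) =
      (d : ℂ)⁻¹ * T (Matrix.single p q 1) a b := by
  simp only [tensorFun_id_apply, vecMulVec_apply, Pi.star_apply, maxEntangled_mul_star]
  simp [ite_and]

lemma map_single_eq_sum_of_tensorFun_maxEntangled_eq {d n m : ℕ} {T : Mat d →ₗ[ℂ] Mat n}
    {c : Fin m → ℝ} {A B : Fin m → Mat d}
    (h : tensorFun (T ·) (id : Mat d → Mat d)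
        (vecMulVec (maxEntangled d) (star (maxEntangled d))) =
      tensorFun (T ·) (id : Mat d → Mat d) (∑ i, (c i : ℂ) • (A i ⊗ₖ B i))) (p q : Fin d) :
    (d : ℂ)⁻¹ • T (Matrix.single p q 1) = ∑ i, ((c i : ℂ) * B i p q) • T (A i) := by
  have hkron : ∀ i, tensorFun (T ·) (id : Mat d → Mat d) (A i ⊗ₖ B i) = T (A i) ⊗ₖ B i :=
    fun i => tensorFun_kronecker T LinearMap.id (A i) (B i)
  rw [tensorFun_sum_smul] at h
  ext a b
  have hab := congrFun₂ h (a, p) (b, q)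
  simp only [tensorFun_id_vecMulVec_maxEntangled_apply] at hab
  simp [hab, hkron, Matrix.sum_apply, mul_assoc, mul_comm (B _ p q)]

lemma sum_smul_eq_inv_smul_one_of_map_single_eq {d n m : ℕ} {T : Mat d →ₗ[ℂ] Mat n}
    (hT : ∀ X, (T X).trace = X.trace) {c : Fin m → ℝ} {A B : Fin m → Mat d}
    (hA : ∀ i, (A i).trace = 1)
    (h : ∀ p q, (d : ℂ)⁻¹ • T (Matrix.single p q 1) = ∑ i, ((c i : ℂ) * B i p q) • T (A i)) :
    ∑ i, (c i : ℂ) • B i = (d : ℂ)⁻¹ • 1 := by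
  ext p q
  have htr := congrArg Matrix.trace (h p q)
  simp only [Matrix.trace_smul, Matrix.trace_sum, hT, hA, smul_eq_mul, mul_one] at htr
  rw [Matrix.sum_apply, Matrix.smul_apply, Matrix.one_apply]
  split_ifs at htr ⊢ with hpq
  · simpa [hpq] using htr.symm
  · simpa [Matrix.trace_single_eq_of_ne _ _ _ hpq] using htr.symm

lemma comp_measurePrepare_eq {d n k : ℕ} {T : Mat d →ₗ[ℂ] Mat n} {F : Fin k → Mat d}
    {σ : Fin k → Mat d} (h : ∀ p q, ∑ i, F i q p • T (σ i) = T (Matrix.single p q 1)) :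
    T ∘ₗ measurePrepare F σ = T := by
  refine Matrix.ext_linearMap (h := fun p q => LinearMap.ext_ring ?_)
  simp [measurePrepare_single, h]

lemma exists_isPOVM_comp_measurePrepare_eq {d n m : ℕ} (hd : d ≠ 0) {T : Mat d →ₗ[ℂ] Mat n}
    (hT : ∀ X, (T X).trace = X.trace) {c : Fin m → ℝ} {A B : Fin m → Mat d}
    (hc : ∀ i, 0 ≤ c i) (hA : ∀ i, IsDensity (A i)) (hB : ∀ i, IsDensity (B i))
    (h : tensorFun (T ·) (id : Mat d → Mat d)
        (vecMulVec (maxEntangled d) (star (maxEntangled d))) =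
      tensorFun (T ·) (id : Mat d → Mat d) (∑ i, (c i : ℂ) • (A i ⊗ₖ B i))) :
    ∃ F : Fin m → Mat d, IsPOVM F ∧ T ∘ₗ measurePrepare F A = T := by
  have hsingle := map_single_eq_sum_of_tensorFun_maxEntangled_eq h
  have hmarginal := sum_smul_eq_inv_smul_one_of_map_single_eq hT (fun i => (hA i).2) hsingle
  have hdC : (d : ℂ) ≠ 0 := Nat.cast_ne_zero.mpr hd
  refine ⟨fun i => ((d * c i : ℝ) : ℂ) • (B i)ᵀ, ⟨fun i => ?_, ?_⟩, comp_measurePrepare_eq ?_⟩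
  · exact (hB i).1.transpose.smul (Complex.zero_le_real.mpr (mul_nonneg d.cast_nonneg (hc i)))
  · simp_rw [Complex.ofReal_mul, ← smul_smul, ← Finset.smul_sum, ← Matrix.transpose_smul,
      ← Matrix.transpose_sum, hmarginal, Matrix.transpose_smul, Matrix.transpose_one, smul_smul,
      Complex.ofReal_natCast, mul_inv_cancel₀ hdC, one_smul]
  · intro p q
    calc ∑ i, (((d * c i : ℝ) : ℂ) • (B i)ᵀ) q p • T (A i)
        = (d : ℂ) • ∑ i, ((c i : ℂ) * B i p q) • T (A i) := by
          simp only [Finset.smul_sum, smul_smul, Matrix.smul_apply, Matrix.transpose_apply,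
            smul_eq_mul, Complex.ofReal_mul, Complex.ofReal_natCast, mul_assoc]
      _ = T (Matrix.single p q 1) := by rw [← hsingle, smul_smul, mul_inv_cancel₀ hdC, one_smul]

/-- if a channel `T` is image additive with the identity channel, then there
exists an entanglement breaking channel `S` with `T = T ∘ S`. -/
theorem stmt15 {d n : ℕ} (T : Mat d →ₗ[ℂ] Mat n) (hT : IsChannel T)
    (hia : ∀ ψ : Fin d × Fin d → ℂ, star ψ ⬝ᵥ ψ = 1 →
      ∃ ρ : Matrix (Fin d × Fin d) (Fin d × Fin d) ℂ,
        IsDensity ρ ∧ SeparableState ρ ∧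
        tensorFun (T ·) (id : Mat d → Mat d) (vecMulVec ψ (star ψ)) =
          tensorFun (T ·) (id : Mat d → Mat d) ρ) :
    ∃ S : Mat d →ₗ[ℂ] Mat d,
      IsChannel S ∧ IsEntanglementBreaking S ∧ T ∘ₗ S = T := by
  obtain ⟨k, F, σ, hF, hσ, hTS⟩ : ∃ (k : ℕ) (F : Fin k → Mat d) (σ : Fin k → Mat d),
      IsPOVM F ∧ (∀ i, IsDensity (σ i)) ∧ T ∘ₗ measurePrepare F σ = T := by
    rcases eq_or_ne d 0 with rfl | hd
    · exact ⟨0, finZeroElim, finZeroElim, ⟨finZeroElim, Subsingleton.elim _ _⟩, finZeroElim,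
        LinearMap.ext fun _ => congrArg T (Subsingleton.elim _ _)⟩
    obtain ⟨-, -, ⟨m, c, A, B, hc, -, hA, hB, rfl⟩, hChoi⟩ :=
      hia _ (star_maxEntangled_dotProduct hd)
    obtain ⟨F, hF, hTS⟩ := exists_isPOVM_comp_measurePrepare_eq hd hT.1 hc hA hB hChoi
    exact ⟨m, F, A, hF, hA, hTS⟩
  exact ⟨_, hF.isChannel_measurePrepare hσ, hF.isEntanglementBreaking_measurePrepare hσ, hTS⟩
end
end

section
/- Let T : M_d(ℂ) → M_n(ℂ) be an essentially classical-quantum channel, T(ρ) = Σᵢ₌₁ᵏ Tr(Mᵢρ)σᵢ with ‖Mᵢ‖ = 1, and suppose σ₁,...,σ_r (r ≤ k) are exactly the extreme points of Im(T) = hull{σ₁,...,σₖ}. Then there exists a POVM (N₁,...,N_r) with ‖Nᵢ‖ = 1 for all i such that T(ρ) = Σᵢ₌₁ʳ Tr(Nᵢρ)σᵢ. -/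
open Matrix Kronecker BigOperators Filter
open scoped InnerProductSpace ComplexOrder

noncomputable section

/-! By Krein–Milman, every `σⱼ` is a convex combination `∑ᵢ vⱼᵢ σᵢ` of the extreme points
`σ₁, …, σ_r`, where for `j ≤ r` we take the point mass at `j`. The coarse-grained POVM
`Nᵢ = ∑ⱼ vⱼᵢ Mⱼ` then reproduces `T`, and `Mᵢ ≤ Nᵢ ≤ 1` in the Loewner order, so
`1 = ‖Mᵢ‖ ≤ ‖Nᵢ‖ ≤ 1` because the C⋆-norm is monotone on positive elements. -/

open scoped MatrixOrder Matrix.Norms.L2Operator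

theorem exists_mem_stdSimplex_of_mem_convexHull_range {𝕜 ι E : Type*} [Field 𝕜] [LinearOrder 𝕜]
    [IsStrictOrderedRing 𝕜] [Fintype ι] [AddCommGroup E] [Module 𝕜 E] {f : ι → E} {x : E}
    (hx : x ∈ convexHull 𝕜 (Set.range f)) : ∃ w ∈ stdSimplex 𝕜 ι, ∑ i, w i • f i = x := by
  classical
  have hf : Set.range f = Fintype.linearCombination 𝕜 f '' Set.range fun i ↦ Pi.single i 1 := by
    simp [← Set.range_comp, Function.comp_def]
  rw [hf, ← LinearMap.image_convexHull, convexHull_rangle_single_eq_stdSimplex] at hx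
  simpa [Fintype.linearCombination_apply] using hx

theorem exists_stochastic_of_mem_convexHull {𝕜 ι κ E : Type*} [Field 𝕜] [LinearOrder 𝕜]
    [IsStrictOrderedRing 𝕜] [Fintype ι] [AddCommGroup E] [Module 𝕜 E] (f : κ → E) (e : ι ↪ κ)
    (hf : ∀ j, f j ∈ convexHull 𝕜 (Set.range (f ∘ e))) :
    ∃ v : κ → ι → 𝕜, (∀ j, v j ∈ stdSimplex 𝕜 ι) ∧ (∀ j, ∑ i, v j i • f (e i) = f j) ∧
      ∀ i, v (e i) i = 1 := by
  classical
  choose w hw hwf using fun j ↦ exists_mem_stdSimplex_of_mem_convexHull_range (hf j)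
  refine ⟨fun j ↦ if h : ∃ i, e i = j then Pi.single h.choose 1 else w j, fun j ↦ ?_,
    fun j ↦ ?_, fun i ↦ ?_⟩
  · dsimp only
    split_ifs
    exacts [single_mem_stdSimplex _ _, hw j]
  · dsimp only
    split_ifs with h
    · simp [Pi.single_apply, h.choose_spec]
    · exact hwf j
  · simp

theorem convexHull_extremePoints_convexHull {E : Type*} [AddCommGroup E] [Module ℝ E]
    [TopologicalSpace E] [T2Space E] [IsTopologicalAddGroup E] [ContinuousSMul ℝ E]
    [LocallyConvexSpace ℝ E] {A : Set E} (hA : A.Finite) :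
    convexHull ℝ ((convexHull ℝ A).extremePoints ℝ) = convexHull ℝ A := by
  have hext : ((convexHull ℝ A).extremePoints ℝ).Finite :=
    hA.subset extremePoints_convexHull_subset
  conv_rhs => rw [← closure_convexHull_extremePoints (hA.isCompact_convexHull ℝ)
    (convex_convexHull ℝ A)]
  rw [(hext.isCompact_convexHull ℝ).isClosed.closure_eq]

theorem opNorm_le_opNorm_of_le {d : ℕ} {A B : Mat d} (hA : A.PosSemidef) (hAB : A ≤ B) :
    opNorm A ≤ opNorm B :=
  CStarAlgebra.norm_le_norm_of_nonneg_of_le (a := A) hA.nonneg hAB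

def coarseGrain {d k r : ℕ} (v : Fin k → Fin r → ℝ) (M : Fin k → Mat d) (i : Fin r) : Mat d :=
  ∑ j, v j i • M j

section CoarseGrain

variable {d k r : ℕ} {M : Fin k → Mat d} {v : Fin k → Fin r → ℝ}

theorem le_coarseGrain (hM : ∀ j, (M j).PosSemidef) (hv : ∀ j i, 0 ≤ v j i) {c : Fin k}
    {i : Fin r} (hci : v c i = 1) : M c ≤ coarseGrain v M i :=
  calc M c = v c i • M c := by rw [hci, one_smul]
    _ ≤ coarseGrain v M i := Finset.single_le_sum (f := fun j ↦ v j i • M j)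
        (fun j _ ↦ ((hM j).smul (hv j i)).nonneg) (Finset.mem_univ c)

theorem trace_coarseGrain_mul (ρ : Mat d) (i : Fin r) :
    (coarseGrain v M i * ρ).trace = ∑ j, v j i • (M j * ρ).trace := by
  simp [coarseGrain, Finset.sum_mul, Matrix.trace_sum, Matrix.trace_smul]

theorem sum_trace_mul_smul_eq_coarseGrain {n : ℕ} {σ : Fin k → Mat n} {τ : Fin r → Mat n}
    (hσ : ∀ j, ∑ i, v j i • τ i = σ j) (ρ : Mat d) :
    ∑ j, (M j * ρ).trace • σ j = ∑ i, (coarseGrain v M i * ρ).trace • τ i := by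
  simp_rw [trace_coarseGrain_mul, ← hσ, Finset.smul_sum, Finset.sum_smul, smul_assoc]
  rw [Finset.sum_comm]
  exact Finset.sum_congr rfl fun i _ ↦ Finset.sum_congr rfl fun j _ ↦ smul_comm _ _ _

end CoarseGrain

namespace IsPOVM

variable {d k r : ℕ} {M : Fin k → Mat d}

theorem coarseGrain (hM : IsPOVM M) {v : Fin k → Fin r → ℝ}
    (hv : ∀ j, v j ∈ stdSimplex ℝ (Fin r)) : IsPOVM (coarseGrain v M) := by
  refine ⟨fun i ↦ (Finset.sum_nonneg fun j _ ↦ ((hM.1 j).smul ((hv j).1 i)).nonneg).posSemidef,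
    ?_⟩
  calc ∑ i, ∑ j, v j i • M j = ∑ j, (∑ i, v j i) • M j := by
        rw [Finset.sum_comm]; simp only [Finset.sum_smul]
    _ = 1 := by simp only [(hv _).2, one_smul, hM.2]

theorem le_one (hM : IsPOVM M) (i : Fin k) : M i ≤ 1 :=
  hM.2 ▸ Finset.single_le_sum (fun j _ ↦ (hM.1 j).nonneg) (Finset.mem_univ i)

theorem opNorm_le_one (hM : IsPOVM M) (i : Fin k) : opNorm (M i) ≤ 1 :=
  (CStarAlgebra.norm_le_one_iff_of_nonneg _ (hM.1 i).nonneg).2 (hM.le_one i)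

end IsPOVM

theorem stmt19_general {d n k r : ℕ} (T : Mat d →ₗ[ℂ] Mat n)
    (M : Fin k → Mat d) (σ : Fin k → Mat n)
    (hPOVM : IsPOVM M) (hnorm : ∀ i, opNorm (M i) = 1)
    (hrep : ∀ ρ, T ρ = ∑ i, (M i * ρ).trace • σ i)
    (hr : r ≤ k)
    (hext : Set.extremePoints ℝ (convexHull ℝ (Set.range σ)) =
      Set.range (fun i : Fin r => σ (Fin.castLE hr i))) :
    ∃ N : Fin r → Mat d,
      IsPOVM N ∧ (∀ i, opNorm (N i) = 1) ∧
      ∀ ρ, T ρ = ∑ i, (N i * ρ).trace • σ (Fin.castLE hr i) := by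
  have hhull : ∀ j, σ j ∈ convexHull ℝ (Set.range (σ ∘ Fin.castLEEmb hr)) := by
    have h := convexHull_extremePoints_convexHull (Set.finite_range σ)
    rw [hext] at h
    exact fun j ↦ h ▸ subset_convexHull ℝ _ ⟨j, rfl⟩
  obtain ⟨v, hv, hvσ, hv_self⟩ := exists_stochastic_of_mem_convexHull σ _ hhull
  have hN := hPOVM.coarseGrain hv
  refine ⟨coarseGrain v M, hN, fun i ↦ le_antisymm (hN.opNorm_le_one i) ?_,
    fun ρ ↦ by rw [hrep, sum_trace_mul_smul_eq_coarseGrain hvσ]; rfl⟩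
  rw [← hnorm (Fin.castLE hr i)]
  exact opNorm_le_opNorm_of_le (hPOVM.1 _) (le_coarseGrain hPOVM.1 (fun j ↦ (hv j).1) (hv_self i))

/-- if `T(ρ) = ∑_{i=1}^k Tr(Mᵢρ)σᵢ` is essentially classical-quantum and
`σ₁, …, σ_r` are exactly the extreme points of `Im(T) = hull{σ₁, …, σₖ}`, then `T` admits
a representation `T(ρ) = ∑_{i=1}^r Tr(Nᵢρ)σᵢ` with `(Nᵢ)` a POVM and `‖Nᵢ‖ = 1`. -/
theorem stmt19 {d n k r : ℕ} (T : Mat d →ₗ[ℂ] Mat n)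
    (M : Fin k → Mat d) (σ : Fin k → Mat n)
    (hPOVM : IsPOVM M) (hnorm : ∀ i, opNorm (M i) = 1) (hσ : ∀ i, IsDensity (σ i))
    (hrep : ∀ ρ, T ρ = ∑ i, (M i * ρ).trace • σ i)
    (hr : r ≤ k)
    (hext : Set.extremePoints ℝ (convexHull ℝ (Set.range σ)) =
      Set.range (fun i : Fin r => σ (Fin.castLE hr i))) :
    ∃ N : Fin r → Mat d,
      IsPOVM N ∧ (∀ i, opNorm (N i) = 1) ∧
      ∀ ρ, T ρ = ∑ i, (N i * ρ).trace • σ (Fin.castLE hr i) :=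
  stmt19_general T M σ hPOVM hnorm hrep hr hext
end
end
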